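/- arXiv:1908.11014 — 2 statements merged into one kernel-verified Lean document; each statement's English description precedes it below -/
import Mathlib

section
/- Let h : ℕ → [0,∞) be a multiplicative function such that h(p) ≤ 2 and h(p^k) ≤ h(p) for all primes p and all k ≥ 2, and suppose that for some constant c > 0 one has ∑_{p ≤ x} h(p) ≪ √x / exp(c√(log x)). Then there exists δ > 0 such that ∑_{n ≤ x} h(n) ≪ √x / exp(δ√(log x)). -/
/-!
Rankin's trick: for `h ≥ 0` and `σ = 1/2 - δ / √(log x)`,
`∑_{n ≤ x} h n ≤ x ^ σ ∑_{n ≤ x} h n n^{-σ} ≤ x ^ σ ∏_{p ≤ x} ∑_k h (p^k) p^{-kσ}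
  ≤ x ^ σ exp (κ ∑_{p ≤ x} h p p^{-σ})`,
where `κ = (1 - 2^{-1/4})⁻¹` bounds the geometric Euler factors because `σ ≥ 1/4` and
`h (p^k) ≤ h p`. As `x ^ σ = √x / exp (δ √(log x))`, it remains to bound the prime sum uniformly
in `x`. The primes in a dyadic block `(2^j, 2^{j+1}]` with `2^j ≤ x` contribute at most `2^{-jσ}`
times the hypothesis bound at `2^{j+1}`, that is `≪ exp ((1/2 - σ) j log 2 - c √((j+1) log 2))`;
since `j log 2 ≤ log x` and `δ ≤ c/2` the exponent is at most `-(c/2) √((j+1) log 2)`,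
which is summable in `j`.
-/

/-- Sum of `h p` over primes `p ≤ x`. -/
noncomputable def primeSum (h : ℕ → ℝ) (x : ℝ) : ℝ :=
  ∑ p ∈ (Finset.Icc 1 ⌊x⌋₊).filter Nat.Prime, h p

/-- Partial sums `∑_{n ≤ x} h n`. -/
noncomputable def partialSum (h : ℕ → ℝ) (x : ℝ) : ℝ :=
  ∑ n ∈ Finset.Icc 1 ⌊x⌋₊, h n

open Finset Real

theorem sum_Icc_le_prod_sum_prime_pow {R : Type*} [CommSemiring R] [PartialOrder R]
    [IsOrderedRing R] {f : ℕ → R} (hf0 : ∀ n, 0 ≤ f n) (hf1 : f 1 = 1)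
    (hfm : ∀ m n, m.Coprime n → f (m * n) = f m * f n) (N : ℕ) :
    ∑ n ∈ Icc 1 N, f n ≤ ∏ p ∈ (Icc 1 N).filter Nat.Prime, ∑ k ∈ range (N + 1), f (p ^ k) := by
  classical
  set P := (Icc 1 N).filter Nat.Prime
  have hsupp {n} (hn : n ∈ Icc 1 N) : n.factorization.support ⊆ P := fun p hp ↦ by
    rw [Nat.support_factorization] at hp
    have hp' := Nat.prime_of_mem_primeFactors hp
    exact mem_filter.2 ⟨mem_Icc.2 ⟨hp'.one_le, (Nat.le_of_mem_primeFactors hp).trans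
      (mem_Icc.1 hn).2⟩, hp'⟩
  let e : ℕ → (∀ p ∈ P, ℕ) := fun n p _ ↦ n.factorization p
  let F : (∀ p ∈ P, ℕ) → R := fun g ↦ ∏ p ∈ P.attach, f (p.1 ^ g p.1 p.2)
  have hFe : ∀ n ∈ Icc 1 N, F (e n) = f n := fun n hn ↦ by
    rw [Nat.multiplicative_factorization f hfm hf1 (by grind),
      Finsupp.prod_of_support_subset _ (hsupp hn) _ fun _ _ ↦ by rw [pow_zero, hf1]]
    exact prod_attach P fun p ↦ f (p ^ n.factorization p)
  have he : Set.InjOn e (Icc 1 N) := fun x hx y hy hxy ↦ by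
    refine Nat.factorization_inj (by grind) (by grind) (Finsupp.ext fun p ↦ ?_)
    by_cases hp : p ∈ P
    · exact congr_fun (congr_fun hxy p) hp
    · rw [Finsupp.notMem_support_iff.1 fun h ↦ hp (hsupp hx h),
        Finsupp.notMem_support_iff.1 fun h ↦ hp (hsupp hy h)]
  have himage : (Icc 1 N).image e ⊆ P.pi fun _ ↦ range (N + 1) := by
    simp only [subset_iff, mem_image, mem_pi, mem_range]
    rintro _ ⟨n, hn, rfl⟩ p -
    exact Nat.lt_succ_of_le ((Nat.factorization_lt p (by grind)).le.trans
      (mem_Icc.1 hn).2)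
  calc ∑ n ∈ Icc 1 N, f n = ∑ g ∈ (Icc 1 N).image e, F g := by
        rw [sum_image he]; exact (sum_congr rfl hFe).symm
    _ ≤ ∑ g ∈ P.pi fun _ ↦ range (N + 1), F g :=
        sum_le_sum_of_subset_of_nonneg himage fun _ _ _ ↦ prod_nonneg fun _ _ ↦ hf0 _
    _ = _ := (prod_sum P (fun _ ↦ range (N + 1)) fun p k ↦ f (p ^ k)).symm

theorem sum_range_mul_pow_le_exp {a : ℕ → ℝ} {A r : ℝ} (ha0 : a 0 = 1)
    (ha : ∀ k, 1 ≤ k → a k ≤ A) (hA : 0 ≤ A) (hr0 : 0 ≤ r) (hr1 : r < 1) (n : ℕ) :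
    ∑ k ∈ range n, a k * r ^ k ≤ exp (A * r / (1 - r)) := by
  rcases n.eq_zero_or_pos with rfl | hn
  · simpa using (exp_pos _).le
  calc ∑ k ∈ range n, a k * r ^ k = 1 + ∑ k ∈ Ico 1 n, a k * r ^ k := by
        rw [sum_range_eq_add_Ico _ hn, ha0, pow_zero, one_mul]
    _ ≤ 1 + ∑ k ∈ Ico 1 n, A * r ^ k := by
        gcongr with k hk
        exact ha k (mem_Ico.1 hk).1
    _ ≤ 1 + A * (r ^ 1 / (1 - r)) := by
        rw [← mul_sum]; gcongr; exact geom_sum_Ico_le_of_lt_one hr0 hr1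
    _ ≤ exp (A * r / (1 - r)) := by
        rw [pow_one, ← mul_div_assoc, add_comm]; exact add_one_le_exp _

theorem sum_Icc_mul_rpow_neg_le_exp {h : ℕ → ℝ} (hnonneg : ∀ n, 0 ≤ h n) (hone : h 1 = 1)
    (hmul : ∀ m n : ℕ, m.Coprime n → h (m * n) = h m * h n)
    (hpk : ∀ p k : ℕ, p.Prime → 2 ≤ k → h (p ^ k) ≤ h p) {σ₀ σ : ℝ} (hσ₀ : 0 < σ₀)
    (hσ : σ₀ ≤ σ) (N : ℕ) :
    ∑ n ∈ Icc 1 N, h n * (n : ℝ) ^ (-σ) ≤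
      exp ((1 - 2 ^ (-σ₀))⁻¹ * ∑ p ∈ (Icc 1 N).filter Nat.Prime, h p * (p : ℝ) ^ (-σ)) := by
  have hq : (2 : ℝ) ^ (-σ₀) < 1 := rpow_lt_one_of_one_lt_of_neg one_lt_two (by linarith)
  have hf0 : ∀ n : ℕ, 0 ≤ h n * (n : ℝ) ^ (-σ) := fun n ↦ by have := hnonneg n; positivity
  have hfm : ∀ m n : ℕ, m.Coprime n →
      h (m * n) * ((m * n : ℕ) : ℝ) ^ (-σ) = h m * (m : ℝ) ^ (-σ) * (h n * (n : ℝ) ^ (-σ)) :=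
    fun m n hmn ↦ by rw [hmul m n hmn, Nat.cast_mul, mul_rpow (by positivity) (by positivity)]; ring
  refine (sum_Icc_le_prod_sum_prime_pow hf0 (by simp [hone]) hfm N).trans ?_
  rw [mul_sum, exp_sum]
  refine prod_le_prod (fun p _ ↦ sum_nonneg fun _ _ ↦ hf0 _) fun p hp ↦ ?_
  have hp := (mem_filter.1 hp).2
  have hp2 : (2 : ℝ) ≤ p := by exact_mod_cast hp.two_le
  set r := (p : ℝ) ^ (-σ)
  have hr0 : 0 ≤ r := by positivity
  have hrq : r ≤ 2 ^ (-σ₀) := calc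
    r ≤ (p : ℝ) ^ (-σ₀) := rpow_le_rpow_of_exponent_le (by linarith) (by linarith)
    _ ≤ 2 ^ (-σ₀) := rpow_le_rpow_of_nonpos two_pos hp2 (by linarith)
  have hpow : ∀ k ≥ 1, h (p ^ k) ≤ h p := fun k hk ↦ by
    rcases hk.eq_or_lt with rfl | hk
    · rw [pow_one]
    · exact hpk p k hp hk
  calc ∑ k ∈ range (N + 1), h (p ^ k) * ((p ^ k : ℕ) : ℝ) ^ (-σ)
        = ∑ k ∈ range (N + 1), h (p ^ k) * r ^ k := by
          simp only [r, Nat.cast_pow, rpow_pow_comm (Nat.cast_nonneg p)]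
    _ ≤ exp (h p * r / (1 - r)) :=
        sum_range_mul_pow_le_exp (by simpa using hone) hpow (hnonneg p) hr0 (hrq.trans_lt hq) _
    _ ≤ exp ((1 - 2 ^ (-σ₀))⁻¹ * (h p * r)) := by
        rw [div_eq_mul_inv, mul_comm]
        have := hnonneg p
        gcongr

theorem partialSum_le_rpow_mul_sum {h : ℕ → ℝ} (hnonneg : ∀ n, 0 ≤ h n) {x σ : ℝ} (hx : 0 ≤ x)
    (hσ : 0 ≤ σ) : partialSum h x ≤ x ^ σ * ∑ n ∈ Icc 1 ⌊x⌋₊, h n * (n : ℝ) ^ (-σ) := by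
  rw [partialSum, mul_sum]
  refine sum_le_sum fun n hn ↦ ?_
  have hn1 : (1 : ℝ) ≤ n := by exact_mod_cast (mem_Icc.1 hn).1
  have hnx : (n : ℝ) ≤ x := (Nat.le_floor_iff hx).1 (mem_Icc.1 hn).2
  have hone : 1 ≤ x ^ σ * (n : ℝ) ^ (-σ) := by
    rw [rpow_neg (by positivity), ← div_eq_mul_inv, one_le_div (by positivity)]
    exact rpow_le_rpow (by positivity) hnx hσ
  calc h n ≤ h n * (x ^ σ * (n : ℝ) ^ (-σ)) := le_mul_of_one_le_right (hnonneg n) hone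
    _ = x ^ σ * (h n * (n : ℝ) ^ (-σ)) := by ring

theorem rpow_half_sub_div_sqrt_log {x : ℝ} (hx : 1 < x) (δ : ℝ) :
    x ^ (1 / 2 - δ / √(log x)) = √x / exp (δ * √(log x)) := by
  have hx0 : 0 < x := by linarith
  have hL : √(log x) ≠ 0 := (sqrt_pos.2 (log_pos hx)).ne'
  rw [rpow_def_of_pos hx0, ← exp_log hx0, ← exp_half, exp_log hx0, ← exp_sub]
  congr 1
  field_simp
  linear_combination 2 * δ * sq_sqrt (log_pos hx).le

theorem sum_Ioc_eq_sum_range_sum_Ioc {M : Type*} [AddCommMonoid M] (f : ℕ → M) {a : ℕ → ℕ}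
    (ha : Monotone a) (m : ℕ) :
    ∑ n ∈ Ioc (a 0) (a m), f n = ∑ j ∈ range m, ∑ n ∈ Ioc (a j) (a (j + 1)), f n := by
  induction m with
  | zero => simp
  | succ m ih =>
    rw [sum_range_succ, ← ih, sum_Ioc_consecutive _ (ha m.zero_le) (ha m.le_succ)]

theorem primeSum_mono {h : ℕ → ℝ} (hnonneg : ∀ n, 0 ≤ h n) : Monotone (primeSum h) :=
  fun _ _ hst ↦ sum_le_sum_of_subset_of_nonneg
    (filter_subset_filter _ (Icc_subset_Icc le_rfl (Nat.floor_mono hst))) fun p _ _ ↦ hnonneg p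

theorem exists_primeSum_le_of_one_le {h : ℕ → ℝ} (hnonneg : ∀ n, 0 ≤ h n) {c : ℝ} (hc : 0 ≤ c)
    (hbound : ∃ C > 0, ∃ x₀ : ℝ, ∀ x ≥ x₀, primeSum h x ≤ C * √x / exp (c * √(log x))) :
    ∃ C ≥ 0, ∀ x ≥ 1, primeSum h x ≤ C * √x / exp (c * √(log x)) := by
  obtain ⟨C, hC, x₀, hx₀⟩ := hbound
  set x₁ := max x₀ 1
  -- on `[1, x₁]`, `primeSum h x ≤ primeSum h x₁` while
  -- `√x / exp (c √(log x)) ≥ exp (-c √(log x₁))`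
  set K := primeSum h x₁ * exp (c * √(log x₁))
  refine ⟨max C K, hC.le.trans (le_max_left _ _), fun x hx ↦ ?_⟩
  rcases le_or_gt x₀ x with hx₀x | hxx₀
  · calc primeSum h x ≤ C * √x / exp (c * √(log x)) := hx₀ x hx₀x
      _ ≤ max C K * √x / exp (c * √(log x)) := by gcongr; exact le_max_left _ _
  have hxx₁ : x ≤ x₁ := hxx₀.le.trans (le_max_left _ _)
  have hone : 1 ≤ exp (c * √(log x₁)) * (√x / exp (c * √(log x))) := by
    rw [mul_div_left_comm, ← exp_sub]
    refine one_le_mul_of_one_le_of_one_le (one_le_sqrt.2 hx) (one_le_exp (sub_nonneg.2 ?_))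
    gcongr
  rw [mul_div_assoc]
  calc primeSum h x ≤ primeSum h x₁ := primeSum_mono hnonneg hxx₁
    _ ≤ K * (√x / exp (c * √(log x))) := by
        rw [mul_assoc]
        exact le_mul_of_one_le_right (sum_nonneg fun p _ ↦ hnonneg p) hone
    _ ≤ max C K * (√x / exp (c * √(log x))) := by gcongr; exact le_max_right _ _

theorem sum_prime_Ioc_mul_rpow_neg_le {h : ℕ → ℝ} (hnonneg : ∀ n, 0 ≤ h n) {σ : ℝ}
    (hσ : 0 ≤ σ) {a b : ℕ} (ha : 0 < a) :
    ∑ p ∈ (Ioc a b).filter Nat.Prime, h p * (p : ℝ) ^ (-σ) ≤ (a : ℝ) ^ (-σ) * primeSum h b := by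
  have ha' : (0 : ℝ) < a := by exact_mod_cast ha
  calc ∑ p ∈ (Ioc a b).filter Nat.Prime, h p * (p : ℝ) ^ (-σ)
        ≤ ∑ p ∈ (Ioc a b).filter Nat.Prime, h p * (a : ℝ) ^ (-σ) := by
          refine sum_le_sum fun p hp ↦ mul_le_mul_of_nonneg_left ?_ (hnonneg p)
          have hap : (a : ℝ) ≤ p := by exact_mod_cast (mem_Ioc.1 (mem_filter.1 hp).1).1.le
          exact rpow_le_rpow_of_nonpos ha' hap (by linarith)
    _ ≤ (a : ℝ) ^ (-σ) * primeSum h b := by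
        rw [← sum_mul, mul_comm, primeSum, Nat.floor_natCast]
        refine mul_le_mul_of_nonneg_left (sum_le_sum_of_subset_of_nonneg
          (filter_subset_filter _ fun n hn ↦ ?_) fun p _ _ ↦ hnonneg p) (by positivity)
        grind

theorem summable_exp_neg_mul_sqrt {a : ℝ} (ha : 0 < a) :
    Summable fun n : ℕ ↦ exp (-(a * √n)) := by
  refine Summable.of_norm_bounded_eventually_nat
    ((summable_one_div_nat_pow.2 one_lt_two).mul_left (24 / a ^ 4))
    (Filter.eventually_atTop.2 ⟨1, fun n hn ↦ ?_⟩)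
  have hn : (0 : ℝ) < n := by exact_mod_cast hn
  have hs : (a * √n) ^ 4 = a ^ 4 * n ^ 2 := by
    rw [mul_pow, show √(n : ℝ) ^ 4 = (√n ^ 2) ^ 2 by ring, sq_sqrt hn.le]
  -- `exp s ≥ s ^ 4 / 4!` turns `exp (-(a √n))` into `O(1 / n ^ 2)`
  have hexp := pow_div_factorial_le_exp (a * √n) (by positivity) 4
  rw [norm_of_nonneg (exp_pos _).le, exp_neg]
  calc (exp (a * √n))⁻¹ ≤ ((a * √n) ^ 4 / (Nat.factorial 4 : ℝ))⁻¹ :=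
        inv_anti₀ (by rw [hs]; positivity) hexp
    _ = 24 / a ^ 4 * (1 / (n : ℝ) ^ 2) := by
        rw [hs]; norm_num [Nat.factorial]; field_simp

theorem rpow_neg_mul_sqrt_div_exp_le {c x σ t : ℝ} (hc : 0 ≤ c) (ht : 1 ≤ t) (htx : t ≤ x)
    (hσ : σ ≤ 1 / 2) (hσx : (1 / 2 - σ) * √(log x) ≤ c / 2) :
    t ^ (-σ) * (√(2 * t) / exp (c * √(log (2 * t)))) ≤ √2 * exp (-(c / 2 * √(log (2 * t)))) := by
  have ht0 : 0 < t := by linarith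
  have hlogt : 0 ≤ log t := log_nonneg ht
  have hlog2t : log t ≤ log (2 * t) := log_le_log ht0 (by linarith)
  -- `log t ≤ log x` makes `(1/2 - σ) log t ≤ (1/2 - σ) √(log x) √(log t) ≤ (c/2) √(log t)`
  have key : (1 / 2 - σ) * log t ≤ c / 2 * √(log (2 * t)) := calc
    (1 / 2 - σ) * log t = (1 / 2 - σ) * √(log t) * √(log t) := by
        rw [mul_assoc, mul_self_sqrt hlogt]
    _ ≤ (1 / 2 - σ) * √(log x) * √(log t) := by
        have : 0 ≤ 1 / 2 - σ := by linarith
        gcongr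
    _ ≤ c / 2 * √(log (2 * t)) := by
        gcongr
  have hsqrt : √t = exp (log t / 2) := by rw [exp_half, exp_log ht0]
  calc t ^ (-σ) * (√(2 * t) / exp (c * √(log (2 * t))))
        = √2 * exp ((1 / 2 - σ) * log t - c * √(log (2 * t))) := by
          rw [rpow_def_of_pos ht0, sqrt_mul zero_le_two, hsqrt, exp_sub,
            show (1 / 2 - σ) * log t = log t * -σ + log t / 2 by ring, exp_add]
          ring
    _ ≤ √2 * exp (-(c / 2 * √(log (2 * t)))) := by
        gcongr
        linarith

theorem sum_prime_Ioc_two_pow_mul_rpow_neg_le {h : ℕ → ℝ} (hnonneg : ∀ n, 0 ≤ h n) {C c : ℝ}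
    (hC : 0 ≤ C) (hc : 0 ≤ c) (hbound : ∀ t ≥ 1, primeSum h t ≤ C * √t / exp (c * √(log t)))
    {x σ : ℝ} (hσ0 : 0 ≤ σ) (hσ : σ ≤ 1 / 2) (hσx : (1 / 2 - σ) * √(log x) ≤ c / 2) {j : ℕ}
    (hjx : (2 : ℝ) ^ j ≤ x) :
    ∑ p ∈ (Ioc (2 ^ j) (2 ^ (j + 1))).filter Nat.Prime, h p * (p : ℝ) ^ (-σ) ≤
      C * √2 * exp (-(c / 2 * √((j + 1) * log 2))) := by
  have hj : (1 : ℝ) ≤ 2 ^ j := one_le_pow₀ one_le_two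
  have hlog : log (2 * 2 ^ j) = (j + 1) * log 2 := by
    rw [← pow_succ', log_pow]; push_cast; ring
  calc _ ≤ ((2 ^ j : ℕ) : ℝ) ^ (-σ) * primeSum h (2 ^ (j + 1) : ℕ) :=
        sum_prime_Ioc_mul_rpow_neg_le hnonneg hσ0 (by positivity)
    _ ≤ (2 ^ j : ℝ) ^ (-σ) * (C * (√(2 * 2 ^ j) / exp (c * √(log (2 * 2 ^ j))))) := by
        rw [← mul_div_assoc, ← pow_succ']
        push_cast
        gcongr
        exact hbound _ (one_le_pow₀ one_le_two)
    _ ≤ C * (√2 * exp (-(c / 2 * √(log (2 * 2 ^ j))))) := by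
        rw [mul_left_comm]
        exact mul_le_mul_of_nonneg_left (rpow_neg_mul_sqrt_div_exp_le hc hj hjx hσ hσx) hC
    _ = _ := by rw [hlog, mul_assoc]

theorem sum_prime_mul_rpow_neg_le {h : ℕ → ℝ} (hnonneg : ∀ n, 0 ≤ h n) {C c : ℝ} (hC : 0 ≤ C)
    (hc : 0 < c) (hbound : ∀ t ≥ 1, primeSum h t ≤ C * √t / exp (c * √(log t)))
    {x σ : ℝ} (hx : 1 ≤ x) (hσ0 : 0 ≤ σ) (hσ : σ ≤ 1 / 2)
    (hσx : (1 / 2 - σ) * √(log x) ≤ c / 2) :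
    ∑ p ∈ (Icc 1 ⌊x⌋₊).filter Nat.Prime, h p * (p : ℝ) ^ (-σ) ≤
      C * √2 * ∑' j : ℕ, exp (-(c / 2 * √((j + 1) * log 2))) := by
  set N := ⌊x⌋₊
  set J := Nat.log 2 N
  have hN : 1 ≤ N := Nat.one_le_floor_iff x |>.2 hx
  have hg : Summable fun j : ℕ ↦ exp (-(c / 2 * √((j + 1) * log 2))) := by
    refine ((summable_nat_add_iff 1).2
      (summable_exp_neg_mul_sqrt (a := c / 2 * √(log 2)) (by positivity))).congr fun j ↦ ?_
    rw [sqrt_mul (by positivity)]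
    push_cast
    ring_nf
  have hblock : ∀ j ∈ range (J + 1),
      ∑ p ∈ (Ioc (2 ^ j) (2 ^ (j + 1))).filter Nat.Prime, h p * (p : ℝ) ^ (-σ) ≤
        C * √2 * exp (-(c / 2 * √((j + 1) * log 2))) := fun j hj ↦ by
    have : 2 ^ j ≤ N := (Nat.pow_le_pow_right two_pos (Nat.lt_succ_iff.1 (mem_range.1 hj))).trans
      (Nat.pow_log_le_self 2 (by omega))
    exact sum_prime_Ioc_two_pow_mul_rpow_neg_le hnonneg hC hc.le hbound hσ0 hσ hσx
      (by exact_mod_cast (Nat.le_floor_iff (zero_le_one.trans hx)).1 this)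
  calc ∑ p ∈ (Icc 1 N).filter Nat.Prime, h p * (p : ℝ) ^ (-σ)
        ≤ ∑ p ∈ (Ioc 1 (2 ^ (J + 1))).filter Nat.Prime, h p * (p : ℝ) ^ (-σ) := by
          refine sum_le_sum_of_subset_of_nonneg (fun p hp ↦ ?_) fun p _ _ ↦ ?_
          · have : N < 2 ^ (J + 1) := Nat.lt_pow_succ_log_self one_lt_two N
            simp only [mem_filter, mem_Icc, mem_Ioc] at hp ⊢
            exact ⟨⟨hp.2.one_lt, by omega⟩, hp.2⟩
          · have := hnonneg p
            positivity
    _ = ∑ j ∈ range (J + 1),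
          ∑ p ∈ (Ioc (2 ^ j) (2 ^ (j + 1))).filter Nat.Prime, h p * (p : ℝ) ^ (-σ) := by
          simp only [sum_filter]
          exact sum_Ioc_eq_sum_range_sum_Ioc _ (pow_right_mono₀ one_le_two) (J + 1)
    _ ≤ ∑ j ∈ range (J + 1), C * √2 * exp (-(c / 2 * √((j + 1) * log 2))) := sum_le_sum hblock
    _ ≤ C * √2 * ∑' j : ℕ, exp (-(c / 2 * √((j + 1) * log 2))) := by
          rw [← mul_sum]
          gcongr
          exact hg.sum_le_tsum _ fun j _ ↦ (exp_pos _).le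

theorem lemma_3_general (h : ℕ → ℝ) (hnonneg : ∀ n, 0 ≤ h n)
    (hone : h 1 = 1)
    (hmul : ∀ m n : ℕ, Nat.Coprime m n → h (m * n) = h m * h n)
    (hpk : ∀ p k : ℕ, p.Prime → 2 ≤ k → h (p ^ k) ≤ h p)
    (c : ℝ) (hc : 0 < c)
    (hbound : ∃ C > 0, ∃ x₀ : ℝ, ∀ x ≥ x₀,
      primeSum h x ≤ C * Real.sqrt x / Real.exp (c * Real.sqrt (Real.log x))) :
    ∃ δ > 0, ∃ C > 0, ∃ x₀ : ℝ, ∀ x ≥ x₀,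
      partialSum h x ≤ C * Real.sqrt x / Real.exp (δ * Real.sqrt (Real.log x)) := by
  obtain ⟨C, hC, hprime⟩ := exists_primeSum_le_of_one_le hnonneg hc.le hbound
  set δ := min (c / 2) (1 / 4)
  set κ := (1 - (2 : ℝ) ^ (-(1 / 4 : ℝ)))⁻¹
  set D := C * √2 * ∑' j : ℕ, exp (-(c / 2 * √((j + 1) * log 2)))
  have hκ : 0 ≤ κ := inv_nonneg.2 (sub_nonneg.2 (rpow_le_one_of_one_le_of_nonpos one_le_two
    (by norm_num)))
  refine ⟨δ, by positivity, exp (κ * D), exp_pos _, exp 1, fun x hx ↦ ?_⟩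
  have hx1 : 1 < x := (one_lt_exp_iff.2 one_pos).trans_le hx
  have hL : 1 ≤ √(log x) := one_le_sqrt.2 ((le_log_iff_exp_le (by linarith)).2 hx)
  set σ := 1 / 2 - δ / √(log x) with hσ_def
  have hσ : 1 / 4 ≤ σ := by
    have : δ / √(log x) ≤ δ := div_le_self (by positivity) hL
    have : δ ≤ 1 / 4 := min_le_right _ _
    linarith
  have hσx : (1 / 2 - σ) * √(log x) ≤ c / 2 := by
    rw [sub_sub_cancel, div_mul_cancel₀ _ (by positivity)]
    exact min_le_left _ _
  calc partialSum h x ≤ x ^ σ * ∑ n ∈ Icc 1 ⌊x⌋₊, h n * (n : ℝ) ^ (-σ) :=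
        partialSum_le_rpow_mul_sum hnonneg (by positivity) (by linarith)
    _ ≤ x ^ σ * exp (κ * D) := by
        gcongr
        refine (sum_Icc_mul_rpow_neg_le_exp hnonneg hone hmul hpk (by norm_num) hσ _).trans ?_
        gcongr
        exact sum_prime_mul_rpow_neg_le hnonneg hC hc hprime hx1.le (by linarith)
          (by have : 0 ≤ δ / √(log x) := by positivity
              linarith)
          hσx
    _ = exp (κ * D) * √x / exp (δ * √(log x)) := by
        rw [rpow_half_sub_div_sqrt_log hx1, mul_div_assoc, mul_comm]

theorem lemma_3 (h : ℕ → ℝ) (hnonneg : ∀ n, 0 ≤ h n)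
    (hone : h 1 = 1)
    (hmul : ∀ m n : ℕ, Nat.Coprime m n → h (m * n) = h m * h n)
    (hp2 : ∀ p : ℕ, p.Prime → h p ≤ 2)
    (hpk : ∀ p k : ℕ, p.Prime → 2 ≤ k → h (p ^ k) ≤ h p)
    (c : ℝ) (hc : 0 < c)
    (hbound : ∃ C > 0, ∃ x₀ : ℝ, ∀ x ≥ x₀,
      primeSum h x ≤ C * Real.sqrt x / Real.exp (c * Real.sqrt (Real.log x))) :
    ∃ δ > 0, ∃ C > 0, ∃ x₀ : ℝ, ∀ x ≥ x₀,
      partialSum h x ≤ C * Real.sqrt x / Real.exp (δ * Real.sqrt (Real.log x)) :=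
  lemma_3_general h hnonneg hone hmul hpk c hc hbound
end

section
/- Suppose h : ℕ → [0,∞) is multiplicative, h(p) ≤ 2 and h(p^k) ≤ h(p) for all primes p and k ≥ 2, and ∑_{p ≤ x} h(p) ≪ √x / exp(c√(log x)) for some c > 0. Then for any 0 < δ < c/2 small enough that exp(δ√(log p)) < √p for all primes p, the series ∑_{n=1}^∞ h(n) exp(δ√(log n)) / √n converges. -/
open Real Filter Topology Finset

lemma sqrt_add_le_sqrt_add_sqrt {x y : ℝ} (hx : 0 ≤ x) (hy : 0 ≤ y) :
    √(x + y) ≤ √x + √y := by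
  rw [sqrt_le_left (by positivity), add_sq, sq_sqrt hx, sq_sqrt hy]
  nlinarith [sqrt_nonneg x, sqrt_nonneg y]

noncomputable def sqrtLogWeight (δ : ℝ) (n : ℕ) : ℝ := exp (δ * √(log n)) / √n

section sqrtLogWeight

variable {δ : ℝ}

lemma sqrtLogWeight_nonneg (δ : ℝ) (n : ℕ) : 0 ≤ sqrtLogWeight δ n := by
  unfold sqrtLogWeight; positivity

@[simp] lemma sqrtLogWeight_one (δ : ℝ) : sqrtLogWeight δ 1 = 1 := by
  simp [sqrtLogWeight]

lemma sqrtLogWeight_mul_le (hδ : 0 ≤ δ) (m n : ℕ) :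
    sqrtLogWeight δ (m * n) ≤ sqrtLogWeight δ m * sqrtLogWeight δ n := by
  rcases Nat.eq_zero_or_pos m with rfl | hm
  · simp [sqrtLogWeight]
  rcases Nat.eq_zero_or_pos n with rfl | hn
  · simp [sqrtLogWeight]
  have hm' : (0 : ℝ) < m := by exact_mod_cast hm
  have hn' : (0 : ℝ) < n := by exact_mod_cast hn
  have hsqrt : √(log (m * n)) ≤ √(log m) + √(log n) := by
    rw [log_mul hm'.ne' hn'.ne']
    exact sqrt_add_le_sqrt_add_sqrt (log_natCast_nonneg m) (log_natCast_nonneg n)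
  rw [sqrtLogWeight, sqrtLogWeight, sqrtLogWeight, div_mul_div_comm, ← exp_add, ← mul_add,
    Nat.cast_mul, sqrt_mul hm'.le]
  gcongr

lemma sqrtLogWeight_pow_le (hδ : 0 ≤ δ) (p k : ℕ) :
    sqrtLogWeight δ (p ^ k) ≤ sqrtLogWeight δ p ^ k := by
  simpa using Finset.le_prod_of_submultiplicative_of_nonneg (sqrtLogWeight δ)
    (sqrtLogWeight_nonneg δ) (sqrtLogWeight_one δ).le (sqrtLogWeight_mul_le hδ) (range k)
    fun _ => p

lemma sqrtLogWeight_le_of_le_of_le (hδ : 0 ≤ δ) {p : ℕ} {a b : ℝ} (ha : 0 < a) (hap : a ≤ p)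
    (hpb : p ≤ b) : sqrtLogWeight δ p ≤ exp (δ * √(log b)) / √a := by
  have hp : (0 : ℝ) < p := ha.trans_le hap
  unfold sqrtLogWeight
  gcongr

lemma sqrtLogWeight_eq_exp {n : ℕ} (hn : n ≠ 0) :
    sqrtLogWeight δ n = exp (√(log n) * (δ - √(log n) / 2)) := by
  have hL : √(log n) * √(log n) = log n := mul_self_sqrt (log_natCast_nonneg n)
  have hsqrt : √(n : ℝ) = exp (log n / 2) := by
    rw [exp_half, exp_log (by positivity)]
  rw [sqrtLogWeight, hsqrt, ← exp_sub]
  congr 1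
  linear_combination hL / 2

lemma tendsto_sqrtLogWeight_atTop (δ : ℝ) : Tendsto (sqrtLogWeight δ) atTop (𝓝 0) := by
  have hexponent : Tendsto (fun L : ℝ => √L * (δ - √L / 2)) atTop atBot := by
    refine tendsto_sqrt_atTop.atTop_mul_atBot₀ ?_
    simpa [sub_eq_add_neg] using tendsto_atBot_add_const_left _ δ
      (tendsto_neg_atTop_atBot.comp (tendsto_sqrt_atTop.atTop_div_const two_pos))
  refine (tendsto_exp_atBot.comp (hexponent.comp
    (tendsto_log_atTop.comp tendsto_natCast_atTop_atTop))).congr' ?_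
  filter_upwards [eventually_ne_atTop 0] with n hn
  exact (sqrtLogWeight_eq_exp hn).symm

end sqrtLogWeight

noncomputable def multiplicativeExtension (f : ℕ → ℝ) (n : ℕ) : ℝ :=
  n.factorization.prod fun p k => f (p ^ k)

section multiplicativeExtension

variable {f g : ℕ → ℝ}

lemma multiplicativeExtension_one : multiplicativeExtension f 1 = 1 := by
  simp [multiplicativeExtension]

lemma multiplicativeExtension_mul_of_coprime {m n : ℕ} (hmn : m.Coprime n) :
    multiplicativeExtension f (m * n) =
      multiplicativeExtension f m * multiplicativeExtension f n := by
  rw [multiplicativeExtension, Nat.factorization_mul_of_coprime hmn,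
    Finsupp.prod_add_index_of_disjoint hmn.disjoint_primeFactors]
  rfl

lemma multiplicativeExtension_prime_pow (hf : f 1 = 1) {p : ℕ} (hp : p.Prime) (k : ℕ) :
    multiplicativeExtension f (p ^ k) = f (p ^ k) := by
  rw [multiplicativeExtension, hp.factorization_pow, Finsupp.prod_single_index (by simpa)]

lemma multiplicativeExtension_nonneg (hf : ∀ n, 0 ≤ f n) (n : ℕ) :
    0 ≤ multiplicativeExtension f n :=
  Finset.prod_nonneg (s := n.factorization.support) fun p _ => hf (p ^ n.factorization p)

lemma multiplicativeExtension_mul (n : ℕ) :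
    multiplicativeExtension (f * g) n =
      multiplicativeExtension f n * multiplicativeExtension g n :=
  Finsupp.prod_mul

lemma le_multiplicativeExtension_of_submultiplicative (hf : ∀ n, 0 ≤ f n) (hf1 : f 1 ≤ 1)
    (hmul : ∀ m n, f (m * n) ≤ f m * f n) {n : ℕ} (hn : n ≠ 0) :
    f n ≤ multiplicativeExtension f n := by
  conv_lhs => rw [← Nat.prod_factorization_pow_eq_self hn]
  exact Finset.le_prod_of_submultiplicative_of_nonneg f hf hf1 hmul _ _

lemma mul_le_multiplicativeExtension_mul (hf0 : ∀ n, 0 ≤ f n) (hf1 : f 1 = 1)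
    (hfmul : ∀ m n, m.Coprime n → f (m * n) = f m * f n) (hg0 : ∀ n, 0 ≤ g n) (hg1 : g 1 ≤ 1)
    (hgmul : ∀ m n, g (m * n) ≤ g m * g n) {n : ℕ} (hn : n ≠ 0) :
    f n * g n ≤ multiplicativeExtension (f * g) n := by
  rw [multiplicativeExtension_mul, multiplicativeExtension,
    ← Nat.multiplicative_factorization f hfmul hf1 hn]
  exact mul_le_mul_of_nonneg_left
    (le_multiplicativeExtension_of_submultiplicative hg0 hg1 hgmul hn) (hf0 n)

end multiplicativeExtension

lemma summable_and_tsum_le_of_le_geometric {a : ℕ → ℝ} {b r : ℝ} (ha : ∀ k, 0 ≤ a k)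
    (hr0 : 0 ≤ r) (hr1 : r < 1) (hab : ∀ k, a (k + 1) ≤ b * r ^ (k + 1)) :
    Summable a ∧ ∑' k, a k ≤ a 0 + b * r / (1 - r) := by
  have hgeom : HasSum (fun k => b * r ^ (k + 1)) (b * r / (1 - r)) := by
    rw [div_eq_mul_inv]
    simpa only [pow_succ', mul_assoc] using (hasSum_geometric_of_lt_one hr0 hr1).mul_left (b * r)
  have htail : Summable fun k => a (k + 1) :=
    Summable.of_nonneg_of_le (fun k => ha _) hab hgeom.summable
  have hsum : Summable a := (summable_nat_add_iff 1).1 htail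
  refine ⟨hsum, ?_⟩
  rw [hsum.tsum_eq_zero_add]
  gcongr
  exact hasSum_le hab htail.hasSum hgeom

lemma summable_exp_neg_mul_sqrt_nat_add_one {b : ℝ} (hb : 0 < b) :
    Summable fun j : ℕ => exp (-(b * √(j + 1))) := by
  have hinv : Summable fun j : ℕ => 1 / ((j : ℝ) + 1) ^ 2 := by
    simpa using (summable_nat_add_iff 1).2 (Real.summable_one_div_nat_pow.2 one_lt_two)
  refine Summable.of_nonneg_of_le (fun j => (exp_pos _).le) (fun j => ?_)
    (hinv.mul_left (24 / b ^ 4))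
  have hj : (0 : ℝ) < j + 1 := by positivity
  have hpow : (b * √(j + 1)) ^ 4 = b ^ 4 * ((j : ℝ) + 1) ^ 2 := by
    rw [mul_pow, show (4 : ℕ) = 2 * 2 from rfl, pow_mul (√_), sq_sqrt hj.le]
  have hexp := Real.pow_div_factorial_le_exp _ (by positivity : 0 ≤ b * √(j + 1)) 4
  rw [hpow, show ((4 : ℕ).factorial : ℝ) = 24 by norm_num [Nat.factorial]] at hexp
  rw [exp_neg, inv_le_comm₀ (exp_pos _) (by positivity)]
  calc (24 / b ^ 4 * (1 / ((j : ℝ) + 1) ^ 2))⁻¹ = b ^ 4 * ((j : ℝ) + 1) ^ 2 / 24 := by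
        field_simp
    _ ≤ _ := hexp

lemma sum_primesBelow_le_add_sum_filter {f : ℕ → ℝ} (hf : ∀ p, p.Prime → 0 ≤ f p) (P N : ℕ) :
    ∑ p ∈ N.primesBelow, f p ≤
      ∑ p ∈ P.primesBelow, f p + ∑ p ∈ N.primesBelow with P ≤ p, f p := by
  rw [← sum_filter_add_sum_filter_not N.primesBelow (· < P)]
  simp only [not_lt]
  refine add_le_add_left (sum_le_sum_of_subset_of_nonneg (fun p => ?_)
    fun p hp _ => hf p (Nat.prime_of_mem_primesBelow hp)) _
  simp only [mem_filter, Nat.mem_primesBelow]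
  exact fun ⟨⟨_, hp⟩, hpP⟩ => ⟨hpP, hp⟩

lemma exists_forall_sum_primesBelow_le_of_eventually_le {f g : ℕ → ℝ} (hf : ∀ p, p.Prime → 0 ≤ f p)
    (hg : ∀ p, p.Prime → 0 ≤ g p) (hfg : ∀ᶠ p in atTop, f p ≤ g p)
    (hB : ∃ B, ∀ N : ℕ, ∑ p ∈ N.primesBelow, g p ≤ B) :
    ∃ B, ∀ N : ℕ, ∑ p ∈ N.primesBelow, f p ≤ B := by
  obtain ⟨P, hP⟩ := eventually_atTop.1 hfg
  obtain ⟨B, hB⟩ := hB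
  refine ⟨∑ p ∈ P.primesBelow, f p + B, fun N => ?_⟩
  calc ∑ p ∈ N.primesBelow, f p
      ≤ ∑ p ∈ P.primesBelow, f p + ∑ p ∈ N.primesBelow with P ≤ p, f p :=
        sum_primesBelow_le_add_sum_filter hf P N
    _ ≤ ∑ p ∈ P.primesBelow, f p + ∑ p ∈ N.primesBelow with P ≤ p, g p := by
        gcongr with p hp
        exact hP p (mem_filter.1 hp).2
    _ ≤ ∑ p ∈ P.primesBelow, f p + ∑ p ∈ N.primesBelow, g p := by
        gcongr
        · exact fun p hp _ => hg p (Nat.prime_of_mem_primesBelow hp)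
        · exact filter_subset _ _
    _ ≤ ∑ p ∈ P.primesBelow, f p + B := by gcongr; exact hB N

lemma sum_mul_sqrtLogWeight_le_of_log_eq {h : ℕ → ℝ} (hh : ∀ n, 0 ≤ h n) {c C x₀ δ : ℝ}
    (hC : 0 ≤ C) (hδ : 0 ≤ δ)
    (hbound : ∀ x ≥ x₀, primeSum h x ≤ C * √x / exp (c * √(log x)))
    {j : ℕ} {s : Finset ℕ} (hs : ∀ p ∈ s, p.Prime ∧ x₀ ≤ p ∧ Nat.log 2 p = j) :
    ∑ p ∈ s, h p * sqrtLogWeight δ p ≤ C * √2 * exp (-((c - δ) * √(log 2) * √(j + 1))) := by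
  rcases s.eq_empty_or_nonempty with rfl | ⟨q, hq⟩
  · simp only [sum_empty]; positivity
  set X : ℕ := 2 ^ (j + 1)
  have hrange : ∀ p ∈ s, p.Prime ∧ x₀ ≤ p ∧ 2 ^ j ≤ p ∧ p < X := by
    intro p hp
    obtain ⟨hprime, hx₀, rfl⟩ := hs p hp
    exact ⟨hprime, hx₀, Nat.pow_log_le_self 2 hprime.ne_zero,
      Nat.lt_pow_succ_log_self one_lt_two p⟩
  have hsqrt_log : √(log X) = √(log 2) * √(j + 1) := by
    rw [Nat.cast_pow, log_pow, mul_comm, Nat.cast_ofNat, sqrt_mul (log_nonneg one_le_two)]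
    push_cast; ring_nf
  have hsqrtX : √(X : ℝ) = √2 * √(2 ^ j : ℝ) := by
    rw [← sqrt_mul zero_le_two, Nat.cast_pow, pow_succ', Nat.cast_ofNat]
  have hprimeSum : ∑ p ∈ s, h p ≤ primeSum h X := by
    refine sum_le_sum_of_subset_of_nonneg (fun p hp => ?_) fun p _ _ => hh p
    obtain ⟨hprime, -, -, hpX⟩ := hrange p hp
    simp only [Nat.floor_natCast, mem_filter, mem_Icc]
    exact ⟨⟨hprime.one_le, hpX.le⟩, hprime⟩
  have hx₀X : x₀ ≤ X := by
    obtain ⟨-, hx₀, -, hqX⟩ := hrange q hq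
    exact hx₀.trans (by exact_mod_cast hqX.le)
  calc ∑ p ∈ s, h p * sqrtLogWeight δ p
      ≤ ∑ p ∈ s, h p * (exp (δ * √(log X)) / √(2 ^ j : ℝ)) := by
        gcongr with p hp
        · exact hh p
        · obtain ⟨-, -, hjp, hpX⟩ := hrange p hp
          exact sqrtLogWeight_le_of_le_of_le hδ (by positivity) (by exact_mod_cast hjp)
            (by exact_mod_cast hpX.le)
    _ = (∑ p ∈ s, h p) * (exp (δ * √(log X)) / √(2 ^ j : ℝ)) := by rw [sum_mul]
    _ ≤ C * √(X : ℝ) / exp (c * √(log X)) * (exp (δ * √(log X)) / √(2 ^ j : ℝ)) := by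
        gcongr
        exact hprimeSum.trans (hbound X hx₀X)
    _ = C * √2 * exp (-((c - δ) * √(log 2) * √(j + 1))) := by
        rw [hsqrtX, mul_assoc (c - δ), ← hsqrt_log, ← neg_mul, neg_sub, sub_mul, exp_sub]
        field_simp

lemma exists_forall_sum_primesBelow_mul_sqrtLogWeight_le {h : ℕ → ℝ} (hh : ∀ n, 0 ≤ h n)
    {c C x₀ δ : ℝ} (hC : 0 ≤ C) (hδ : 0 ≤ δ) (hδc : δ < c)
    (hbound : ∀ x ≥ x₀, primeSum h x ≤ C * √x / exp (c * √(log x))) :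
    ∃ B, ∀ N : ℕ, ∑ p ∈ N.primesBelow, h p * sqrtLogWeight δ p ≤ B := by
  set u : ℕ → ℝ := fun j => C * √2 * exp (-((c - δ) * √(log 2) * √(j + 1)))
  have hu : Summable u := (summable_exp_neg_mul_sqrt_nat_add_one
    (mul_pos (sub_pos.2 hδc) (sqrt_pos.2 (log_pos one_lt_two)))).mul_left _
  set P := ⌈x₀⌉₊
  refine ⟨∑ p ∈ P.primesBelow, h p * sqrtLogWeight δ p + ∑' j, u j, fun N => ?_⟩
  have hlog : ∀ p ∈ N.primesBelow.filter (P ≤ ·), Nat.log 2 p ∈ range N := fun p hp =>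
    mem_range.2 ((Nat.log_le_self 2 p).trans_lt (Nat.lt_of_mem_primesBelow (mem_filter.1 hp).1))
  calc ∑ p ∈ N.primesBelow, h p * sqrtLogWeight δ p
      ≤ ∑ p ∈ P.primesBelow, h p * sqrtLogWeight δ p +
          ∑ p ∈ N.primesBelow with P ≤ p, h p * sqrtLogWeight δ p :=
        sum_primesBelow_le_add_sum_filter
          (fun p _ => mul_nonneg (hh p) (sqrtLogWeight_nonneg δ p)) P N
    _ = ∑ p ∈ P.primesBelow, h p * sqrtLogWeight δ p + ∑ j ∈ range N,
          ∑ p ∈ N.primesBelow with P ≤ p ∧ Nat.log 2 p = j, h p * sqrtLogWeight δ p := by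
        rw [← sum_fiberwise_of_maps_to hlog]
        simp_rw [filter_filter]
    _ ≤ ∑ p ∈ P.primesBelow, h p * sqrtLogWeight δ p + ∑ j ∈ range N, u j := by
        gcongr with j
        refine sum_mul_sqrtLogWeight_le_of_log_eq hh hC hδ hbound fun p hp => ?_
        simp only [mem_filter, Nat.mem_primesBelow] at hp
        exact ⟨hp.1.2, Nat.ceil_le.1 hp.2.1, hp.2.2⟩
    _ ≤ ∑ p ∈ P.primesBelow, h p * sqrtLogWeight δ p + ∑' j, u j := by
        gcongr
        exact hu.sum_le_tsum _ fun j _ => by positivity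

lemma exists_forall_sum_primesBelow_mul_sqrtLogWeight_div_le {h : ℕ → ℝ} (hh : ∀ n, 0 ≤ h n)
    {c C x₀ δ : ℝ} (hC : 0 ≤ C) (hδ : 0 ≤ δ) (hδc : δ < c)
    (hbound : ∀ x ≥ x₀, primeSum h x ≤ C * √x / exp (c * √(log x)))
    (hw : ∀ p : ℕ, p.Prime → sqrtLogWeight δ p < 1) :
    ∃ B, ∀ N : ℕ, ∑ p ∈ N.primesBelow,
      h p * sqrtLogWeight δ p / (1 - sqrtLogWeight δ p) ≤ B := by
  have hsmall : ∀ᶠ p in atTop, sqrtLogWeight δ p ≤ 1 / 2 :=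
    (tendsto_sqrtLogWeight_atTop δ).eventually (ge_mem_nhds one_half_pos)
  obtain ⟨B, hB⟩ := exists_forall_sum_primesBelow_mul_sqrtLogWeight_le hh hC hδ hδc hbound
  refine exists_forall_sum_primesBelow_le_of_eventually_le
    (g := fun p => 2 * (h p * sqrtLogWeight δ p))
    (fun p hp => div_nonneg (mul_nonneg (hh p) (sqrtLogWeight_nonneg δ p))
      (sub_nonneg.2 (hw p hp).le))
    (fun p _ => by have := sqrtLogWeight_nonneg δ p; have := hh p; positivity)
    (hsmall.mono fun p hp => ?_) ⟨2 * B, fun N => by rw [← mul_sum]; linarith [hB N]⟩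
  rw [div_le_iff₀ (by linarith)]
  nlinarith [mul_nonneg (hh p) (sqrtLogWeight_nonneg δ p)]

lemma summable_and_tsum_multiplicativeExtension_prime_pow_le {h : ℕ → ℝ} (hh : ∀ n, 0 ≤ h n)
    (hone : h 1 = 1) {p : ℕ} (hp : p.Prime) (hpk : ∀ k, 2 ≤ k → h (p ^ k) ≤ h p) {δ : ℝ}
    (hδ : 0 ≤ δ) (hw : sqrtLogWeight δ p < 1) :
    Summable (fun k => multiplicativeExtension (h * sqrtLogWeight δ) (p ^ k)) ∧
      ∑' k, multiplicativeExtension (h * sqrtLogWeight δ) (p ^ k) ≤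
        1 + h p * sqrtLogWeight δ p / (1 - sqrtLogWeight δ p) := by
  have hpk' : ∀ k, h (p ^ (k + 1)) ≤ h p := fun
    | 0 => by rw [pow_one]
    | k + 1 => hpk _ (by omega)
  have hone' : (h * sqrtLogWeight δ) 1 = 1 := by simp [hone]
  simp only [multiplicativeExtension_prime_pow hone' hp]
  simpa [hone] using summable_and_tsum_le_of_le_geometric
    (fun k => mul_nonneg (hh _) (sqrtLogWeight_nonneg δ _)) (sqrtLogWeight_nonneg δ p) hw
    fun k => mul_le_mul (hpk' k) (sqrtLogWeight_pow_le hδ p _) (sqrtLogWeight_nonneg δ _) (hh p)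

lemma sum_range_le_exp_sum_primesBelow {f t : ℕ → ℝ} (hf : ∀ n, 0 ≤ f n) (hf1 : f 1 = 1)
    (hmul : ∀ {m n : ℕ}, m.Coprime n → f (m * n) = f m * f n)
    (hlocal : ∀ {p : ℕ}, p.Prime → Summable (fun k => f (p ^ k)) ∧ ∑' k, f (p ^ k) ≤ 1 + t p)
    (N : ℕ) : ∑ n ∈ range N, f (n + 1) ≤ exp (∑ p ∈ (N + 1).primesBelow, t p) := by
  classical
  have hnorm : ∀ {p : ℕ}, p.Prime → Summable fun k => ‖f (p ^ k)‖ := fun hp =>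
    (hlocal hp).1.congr fun k => (norm_of_nonneg (hf _)).symm
  have hsmooth : ∀ m ∈ (range N).map (addRightEmbedding 1), m ∈ (N + 1).smoothNumbers := by
    simp only [Finset.mem_map, mem_range, addRightEmbedding_apply]
    rintro _ ⟨n, hn, rfl⟩
    exact Nat.mem_smoothNumbers_of_lt n.succ_pos (by omega)
  calc ∑ n ∈ range N, f (n + 1)
      = ∑ m ∈ ((range N).map (addRightEmbedding 1)).subtype (· ∈ (N + 1).smoothNumbers), f m := by
        rw [sum_subtype_of_mem f hsmooth, sum_map]
        rfl
    _ ≤ ∏ p ∈ (N + 1).primesBelow, ∑' k, f (p ^ k) :=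
        sum_le_hasSum _ (fun m _ => hf m)
          (EulerProduct.summable_and_hasSum_smoothNumbers_prod_primesBelow_tsum hf1 hmul hnorm _).2
    _ ≤ ∏ p ∈ (N + 1).primesBelow, exp (t p) := by
        refine prod_le_prod (fun p _ => tsum_nonneg fun k => hf _) fun p hp => ?_
        linarith [(hlocal (Nat.prime_of_mem_primesBelow hp)).2, add_one_le_exp (t p)]
    _ = exp (∑ p ∈ (N + 1).primesBelow, t p) := (exp_sum _ _).symm

theorem series_converges_general (h : ℕ → ℝ) (hnonneg : ∀ n, 0 ≤ h n)
    (hone : h 1 = 1)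
    (hmul : ∀ m n : ℕ, Nat.Coprime m n → h (m * n) = h m * h n)
    (hpk : ∀ p k : ℕ, p.Prime → 2 ≤ k → h (p ^ k) ≤ h p)
    (c : ℝ)
    (hbound : ∃ C > 0, ∃ x₀ : ℝ, ∀ x ≥ x₀,
      primeSum h x ≤ C * Real.sqrt x / Real.exp (c * Real.sqrt (Real.log x)))
    (δ : ℝ) (hδ0 : 0 < δ) (hδc : δ < c / 2)
    (hδsmall : ∀ p : ℕ, p.Prime →
      Real.exp (δ * Real.sqrt (Real.log p)) < Real.sqrt p) :
    Summable (fun n : ℕ =>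
      h (n + 1) * Real.exp (δ * Real.sqrt (Real.log (n + 1))) / Real.sqrt (n + 1)) := by
  obtain ⟨C, hC, x₀, hbound⟩ := hbound
  have hw : ∀ p : ℕ, p.Prime → sqrtLogWeight δ p < 1 := fun p hp =>
    (div_lt_one (sqrt_pos.2 (by exact_mod_cast hp.pos))).2 (hδsmall p hp)
  obtain ⟨B, hB⟩ := exists_forall_sum_primesBelow_mul_sqrtLogWeight_div_le hnonneg hC.le hδ0.le
    (by linarith) hbound hw
  have hG0 : ∀ n, 0 ≤ multiplicativeExtension (h * sqrtLogWeight δ) n :=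
    multiplicativeExtension_nonneg fun n => mul_nonneg (hnonneg n) (sqrtLogWeight_nonneg δ n)
  refine summable_of_sum_range_le (c := exp B)
    (fun n => div_nonneg (mul_nonneg (hnonneg _) (exp_pos _).le) (sqrt_nonneg _)) fun N => ?_
  calc ∑ n ∈ range N, h (n + 1) * exp (δ * √(log (n + 1))) / √(n + 1)
      = ∑ n ∈ range N, h (n + 1) * sqrtLogWeight δ (n + 1) := by
        simp only [sqrtLogWeight, Nat.cast_add_one, mul_div_assoc]
    _ ≤ ∑ n ∈ range N, multiplicativeExtension (h * sqrtLogWeight δ) (n + 1) := by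
        gcongr with n
        exact mul_le_multiplicativeExtension_mul hnonneg hone hmul (sqrtLogWeight_nonneg δ)
          (sqrtLogWeight_one δ).le (sqrtLogWeight_mul_le hδ0.le) n.succ_ne_zero
    _ ≤ exp (∑ p ∈ (N + 1).primesBelow, h p * sqrtLogWeight δ p / (1 - sqrtLogWeight δ p)) :=
        sum_range_le_exp_sum_primesBelow hG0 multiplicativeExtension_one
          multiplicativeExtension_mul_of_coprime (fun hp =>
            summable_and_tsum_multiplicativeExtension_prime_pow_le hnonneg hone hp (hpk _ · hp)
              hδ0.le (hw _ hp)) N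
    _ ≤ exp B := exp_le_exp.2 (hB _)

theorem series_converges (h : ℕ → ℝ) (hnonneg : ∀ n, 0 ≤ h n)
    (hone : h 1 = 1)
    (hmul : ∀ m n : ℕ, Nat.Coprime m n → h (m * n) = h m * h n)
    (hp2 : ∀ p : ℕ, p.Prime → h p ≤ 2)
    (hpk : ∀ p k : ℕ, p.Prime → 2 ≤ k → h (p ^ k) ≤ h p)
    (c : ℝ) (hc : 0 < c)
    (hbound : ∃ C > 0, ∃ x₀ : ℝ, ∀ x ≥ x₀,
      primeSum h x ≤ C * Real.sqrt x / Real.exp (c * Real.sqrt (Real.log x)))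
    (δ : ℝ) (hδ0 : 0 < δ) (hδc : δ < c / 2)
    (hδsmall : ∀ p : ℕ, p.Prime →
      Real.exp (δ * Real.sqrt (Real.log p)) < Real.sqrt p) :
    Summable (fun n : ℕ =>
      h (n + 1) * Real.exp (δ * Real.sqrt (Real.log (n + 1))) / Real.sqrt (n + 1)) :=
  series_converges_general h hnonneg hone hmul hpk c hbound δ hδ0 hδc hδsmall
end
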